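/- arXiv:2502.14751 — 3 statements merged into one kernel-verified Lean document; each statement's English description precedes it below -/
import Mathlib

section
/- Let R be a ring, let n ≥ 1 be a natural number, and let 0 → K → M → N → 0 be a short exact sequence of R-modules. If K is of type FP_{n-1} and M is of type FP_n, then N is of type FP_n. -/
universe u v

/-- An `R`-module `M` is of type `FP n` if there exists a projective resolution
`⋯ → P 1 → P 0 → M → 0` of `M` by `R`-modules such that the projective `R`-module `P i`
is finitely generated for all `i ≤ n`. -/
def ModuleFP (R : Type u) [Ring R] (n : ℕ) (M : Type v) [AddCommGroup M] [Module R M] : Prop :=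
  ∃ (P : ℕ → ModuleCat.{v} R) (d : ∀ i : ℕ, P (i + 1) →ₗ[R] P i) (ε : P 0 →ₗ[R] M),
    (∀ i : ℕ, Module.Projective R (P i)) ∧
    (∀ i : ℕ, i ≤ n → Module.Finite R (P i)) ∧
    Function.Surjective ε ∧
    Function.Exact (d 0) ε ∧
    (∀ i : ℕ, Function.Exact (d (i + 1)) (d i))

section ChainMap

variable {R : Type u} [Ring R]

lemma FPlift_exists {A B C : Type v} [AddCommGroup A] [AddCommGroup B] [AddCommGroup C]
    [Module R A] [Module R B] [Module R C]
    (hA : Module.Projective R A) (u : A →ₗ[R] C) (v : B →ₗ[R] C)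
    (h : ∀ x, u x ∈ LinearMap.range v) : ∃ w : A →ₗ[R] B, ∀ x, v (w x) = u x := by
  haveI := hA
  obtain ⟨w, hw⟩ := Module.projective_lifting_property v.rangeRestrict
    (u.codRestrict (LinearMap.range v) h) (LinearMap.surjective_rangeRestrict v)
  exact ⟨w, fun x => congrArg Subtype.val (DFunLike.congr_fun hw x)⟩

open Classical in
noncomputable def FPlift {A B C : Type v} [AddCommGroup A] [AddCommGroup B] [AddCommGroup C]
    [Module R A] [Module R B] [Module R C]
    (u : A →ₗ[R] C) (v : B →ₗ[R] C) : A →ₗ[R] B :=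
  if h : ∃ w : A →ₗ[R] B, ∀ x, v (w x) = u x then h.choose else 0

lemma FPlift_spec {A B C : Type v} [AddCommGroup A] [AddCommGroup B] [AddCommGroup C]
    [Module R A] [Module R B] [Module R C]
    (u : A →ₗ[R] C) (v : B →ₗ[R] C) (h : ∃ w : A →ₗ[R] B, ∀ x, v (w x) = u x) :
    ∀ x, v (FPlift u v x) = u x := by
  rw [FPlift, dif_pos h]
  exact h.choose_spec

variable {K' M' : Type v} [AddCommGroup K'] [AddCommGroup M'] [Module R K'] [Module R M']

noncomputable def FPphi (P Q : ℕ → ModuleCat.{v} R)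
    (dP : ∀ i, P (i + 1) →ₗ[R] P i) (dQ : ∀ i, Q (i + 1) →ₗ[R] Q i)
    (εP : P 0 →ₗ[R] K') (εQ : Q 0 →ₗ[R] M') (f : K' →ₗ[R] M') : ∀ i, P i →ₗ[R] Q i
  | 0 => FPlift (f ∘ₗ εP) εQ
  | (i + 1) => FPlift (FPphi P Q dP dQ εP εQ f i ∘ₗ dP i) (dQ i)

lemma FPphi_zero (P Q : ℕ → ModuleCat.{v} R)
    (dP : ∀ i, P (i + 1) →ₗ[R] P i) (dQ : ∀ i, Q (i + 1) →ₗ[R] Q i)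
    (εP : P 0 →ₗ[R] K') (εQ : Q 0 →ₗ[R] M') (f : K' →ₗ[R] M')
    (hproj : Module.Projective R (P 0)) (hsurj : Function.Surjective εQ) :
    ∀ x, εQ (FPphi P Q dP dQ εP εQ f 0 x) = f (εP x) := by
  have h : ∀ x, (f ∘ₗ εP) x ∈ LinearMap.range εQ := fun x =>
    LinearMap.range_eq_top.mpr hsurj ▸ Submodule.mem_top
  intro x
  exact FPlift_spec (f ∘ₗ εP) εQ (FPlift_exists hproj _ _ h) x

lemma FPphi_comm (P Q : ℕ → ModuleCat.{v} R)
    (dP : ∀ i, P (i + 1) →ₗ[R] P i) (dQ : ∀ i, Q (i + 1) →ₗ[R] Q i)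
    (εP : P 0 →ₗ[R] K') (εQ : Q 0 →ₗ[R] M') (f : K' →ₗ[R] M')
    (hproj : ∀ i, Module.Projective R (P i))
    (hsurj : Function.Surjective εQ)
    (hQ0 : Function.Exact (dQ 0) εQ)
    (hQ : ∀ i, Function.Exact (dQ (i + 1)) (dQ i))
    (hP0 : ∀ x, εP (dP 0 x) = 0)
    (hP : ∀ i x, dP i (dP (i + 1) x) = 0) :
    ∀ i x, dQ i (FPphi P Q dP dQ εP εQ f (i + 1) x) =
      FPphi P Q dP dQ εP εQ f i (dP i x) := by
  intro i
  induction i with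
  | zero =>
    have h : ∀ x, (FPphi P Q dP dQ εP εQ f 0 ∘ₗ dP 0) x ∈ LinearMap.range (dQ 0) := by
      intro x
      have : εQ ((FPphi P Q dP dQ εP εQ f 0 ∘ₗ dP 0) x) = 0 := by
        simp only [LinearMap.comp_apply]
        rw [FPphi_zero P Q dP dQ εP εQ f (hproj 0) hsurj, hP0, map_zero]
      exact (hQ0 _).mp this
    exact fun x => FPlift_spec _ _ (FPlift_exists (hproj 1) _ _ h) x
  | succ i ih =>
    have h : ∀ x, (FPphi P Q dP dQ εP εQ f (i + 1) ∘ₗ dP (i + 1)) x ∈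
        LinearMap.range (dQ (i + 1)) := by
      intro x
      have : dQ i ((FPphi P Q dP dQ εP εQ f (i + 1) ∘ₗ dP (i + 1)) x) = 0 := by
        simp only [LinearMap.comp_apply]
        rw [ih, hP, map_zero]
      exact ((hQ i) _).mp this
    exact fun x => FPlift_spec _ _ (FPlift_exists (hproj (i + 2)) _ _ h) x

end ChainMap

/-- Let `R` be a ring, let `n ≥ 1`, and let `0 → K → M → N → 0` be a short exact sequence of
`R`-modules. If `K` is of type `FP (n-1)` and `M` is of type `FP n`, then `N` is of
type `FP n`. -/
theorem fp_quotient_of_fp {R : Type u} [Ring R] (n : ℕ) (hn : 1 ≤ n)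
    {K M N : Type v} [AddCommGroup K] [AddCommGroup M] [AddCommGroup N]
    [Module R K] [Module R M] [Module R N]
    (f : K →ₗ[R] M) (g : M →ₗ[R] N)
    (hf : Function.Injective f) (hg : Function.Surjective g)
    (hfg : Function.Exact f g)
    (hK : ModuleFP R (n - 1) K) (hM : ModuleFP R n M) :
    ModuleFP R n N := by
  obtain ⟨P, dP, εP, hPproj, hPfin, hPsurj, hPex0, hPex⟩ := hK
  obtain ⟨Q, dQ, εQ, hQproj, hQfin, hQsurj, hQex0, hQex⟩ := hM
  set Φ := FPphi P Q dP dQ εP εQ f with hΦ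
  have hc0 : ∀ x, εQ (Φ 0 x) = f (εP x) :=
    FPphi_zero P Q dP dQ εP εQ f (hPproj 0) hQsurj
  have hcomm : ∀ i x, dQ i (Φ (i + 1) x) = Φ i (dP i x) :=
    FPphi_comm P Q dP dQ εP εQ f hPproj hQsurj hQex0 hQex
      (fun x => hPex0.apply_apply_eq_zero x) (fun i x => (hPex i).apply_apply_eq_zero x)
  refine ⟨fun i => match i with
      | 0 => Q 0
      | (j + 1) => ModuleCat.of R (↥(P j) × ↥(Q (j + 1))),
    fun i => match i with
      | 0 => LinearMap.coprod (Φ 0) (dQ 0)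
      | (j + 1) => LinearMap.prod
          ((-(dP j)) ∘ₗ LinearMap.fst R (P (j + 1)) (Q (j + 2)))
          (LinearMap.coprod (Φ (j + 1)) (dQ (j + 1))),
    g ∘ₗ εQ, ?_, ?_, ?_, ?_, ?_⟩
  · intro i
    match i with
    | 0 => exact hQproj 0
    | (j + 1) =>
      haveI := hPproj j
      haveI := hQproj (j + 1)
      exact inferInstanceAs (Module.Projective R (↥(P j) × ↥(Q (j + 1))))
  · intro i hi
    match i with
    | 0 => exact hQfin 0 (Nat.zero_le n)
    | (j + 1) =>
      haveI := hPfin j (by omega)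
      haveI := hQfin (j + 1) hi
      exact inferInstanceAs (Module.Finite R (↥(P j) × ↥(Q (j + 1))))
  · rw [LinearMap.coe_comp]
    exact hg.comp hQsurj
  · intro y
    constructor
    · intro hy
      simp only [LinearMap.comp_apply] at hy
      obtain ⟨k, hk⟩ := (hfg (εQ y)).mp hy
      obtain ⟨p, hp⟩ := hPsurj k
      have h1 : εQ (y - Φ 0 p) = 0 := by
        rw [map_sub, hc0, hp, hk, sub_self]
      obtain ⟨q, hq⟩ := (hQex0 _).mp h1
      refine ⟨(p, q), ?_⟩
      show Φ 0 p + dQ 0 q = y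
      rw [hq]; abel
    · rintro ⟨⟨p, q⟩, rfl⟩
      show g (εQ (Φ 0 p + dQ 0 q)) = 0
      rw [map_add, hc0, hQex0.apply_apply_eq_zero, add_zero, hfg.apply_apply_eq_zero]
  · intro i
    match i with
    | 0 =>
      intro y
      constructor
      · intro hy
        obtain ⟨p, q⟩ := y
        have hy' : Φ 0 p + dQ 0 q = 0 := hy
        have h1 : f (εP p) = 0 := by
          rw [← hc0]
          have h0 : εQ (Φ 0 p) + εQ (dQ 0 q) = 0 := by rw [← map_add, hy', map_zero]
          rwa [hQex0.apply_apply_eq_zero, add_zero] at h0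
        have h2 : εP p = 0 := by
          apply hf; rw [h1, map_zero]
        obtain ⟨p', hp'⟩ := (hPex0 _).mp h2
        have h3 : dQ 0 (Φ 1 p' + q) = 0 := by
          rw [map_add, hcomm, hp', hy']
        obtain ⟨q', hq'⟩ := ((hQex 0) _).mp h3
        refine ⟨(-p', q'), ?_⟩
        show ((-(dP 0)) (-p'), Φ 1 (-p') + dQ 1 q') = (p, q)
        refine Prod.ext ?_ ?_
        · show (-(dP 0)) (-p') = p
          rw [LinearMap.neg_apply, map_neg, neg_neg, hp']
        · show Φ 1 (-p') + dQ 1 q' = q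
          rw [map_neg, hq']; abel
      · rintro ⟨⟨p', q'⟩, rfl⟩
        show Φ 0 ((-(dP 0)) p') + dQ 0 (Φ 1 p' + dQ 1 q') = 0
        rw [LinearMap.neg_apply, map_neg, map_add, hcomm,
          (hQex 0).apply_apply_eq_zero, add_zero, neg_add_cancel]
    | (j + 1) =>
      intro y
      constructor
      · intro hy
        obtain ⟨p, q⟩ := y
        have hy1 : (-(dP j)) p = 0 := congrArg Prod.fst hy
        have hy2 : Φ (j + 1) p + dQ (j + 1) q = 0 := congrArg Prod.snd hy
        have h2 : dP j p = 0 := by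
          rwa [LinearMap.neg_apply, neg_eq_zero] at hy1
        obtain ⟨p', hp'⟩ := ((hPex j) _).mp h2
        have h3 : dQ (j + 1) (Φ (j + 2) p' + q) = 0 := by
          rw [map_add, hcomm, hp', hy2]
        obtain ⟨q', hq'⟩ := ((hQex (j + 1)) _).mp h3
        refine ⟨(-p', q'), ?_⟩
        show ((-(dP (j + 1))) (-p'), Φ (j + 2) (-p') + dQ (j + 2) q') = (p, q)
        refine Prod.ext ?_ ?_
        · show (-(dP (j + 1))) (-p') = p
          rw [LinearMap.neg_apply, map_neg, neg_neg, hp']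
        · show Φ (j + 2) (-p') + dQ (j + 2) q' = q
          rw [map_neg, hq']; abel
      · rintro ⟨⟨p', q'⟩, rfl⟩
        show ((-(dP j)) ((-(dP (j + 1))) p'),
          Φ (j + 1) ((-(dP (j + 1))) p') + dQ (j + 1) (Φ (j + 2) p' + dQ (j + 2) q')) = 0
        refine Prod.ext ?_ ?_
        · show (-(dP j)) ((-(dP (j + 1))) p') = 0
          rw [LinearMap.neg_apply, LinearMap.neg_apply, map_neg, neg_neg,
            (hPex j).apply_apply_eq_zero]
        · show Φ (j + 1) ((-(dP (j + 1))) p') + dQ (j + 1) (Φ (j + 2) p' + dQ (j + 2) q') = 0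
          rw [LinearMap.neg_apply, map_neg, map_add, hcomm,
            (hQex (j + 1)).apply_apply_eq_zero, add_zero, neg_add_cancel]
end

section
/- Let R be a ring, let n ∈ ℕ, and let 0 → K → M → N → 0 be a short exact sequence of R-modules. If both K and N are of type FP_n, then M is of type FP_n. -/
universe u v

/-- Inductive construction of the connecting maps in the horseshoe lemma. -/
lemma exists_theta {R : Type u} [Ring R]
    {K M N : Type v} [AddCommGroup K] [AddCommGroup M] [AddCommGroup N]
    [Module R K] [Module R M] [Module R N]
    (f : K →ₗ[R] M) (g : M →ₗ[R] N)
    (hf : Function.Injective f) (hfg : Function.Exact f g)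
    (P Q : ℕ → ModuleCat.{v} R)
    (dP : ∀ i : ℕ, P (i + 1) →ₗ[R] P i) (dQ : ∀ i : ℕ, Q (i + 1) →ₗ[R] Q i)
    (εP : P 0 →ₗ[R] K)
    (hQproj : ∀ i, Module.Projective R (Q i))
    (hεP : Function.Surjective εP)
    (hexP0 : Function.Exact (dP 0) εP)
    (hexP : ∀ i, Function.Exact (dP (i + 1)) (dP i))
    (hexQ : ∀ i, Function.Exact (dQ (i + 1)) (dQ i))
    (σ : Q 0 →ₗ[R] M) (hσ0 : ∀ q : Q 1, g (σ (dQ 0 q)) = 0) :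
    ∃ θ : ∀ i : ℕ, (Q (i + 1) : Type v) →ₗ[R] P i,
      (∀ q, f (εP (θ 0 q)) = - σ (dQ 0 q)) ∧
      (∀ i q, dP i (θ (i + 1) q) = - θ i (dQ (i + 1) q)) := by
  classical
  haveI := hQproj
  -- corestriction of σ ∘ dQ 0 through f
  have hmem : ∀ q : Q 1, σ (dQ 0 q) ∈ LinearMap.range f := by
    intro q
    obtain ⟨k, hk⟩ := (hfg _).mp (hσ0 q)
    exact ⟨k, hk⟩
  let e : K ≃ₗ[R] LinearMap.range f := LinearEquiv.ofInjective f hf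
  let c : (Q 1 : Type v) →ₗ[R] K :=
    e.symm.toLinearMap ∘ₗ LinearMap.codRestrict (LinearMap.range f) (σ ∘ₗ dQ 0) hmem
  have hc : ∀ q, f (c q) = σ (dQ 0 q) := by
    intro q
    have h1 : e (c q) = ⟨σ (dQ 0 q), hmem q⟩ := e.apply_symm_apply _
    have h2 : (e (c q) : M) = f (c q) := rfl
    rw [h1] at h2
    exact h2.symm
  -- θ 0
  obtain ⟨θ0, hθ0⟩ := Module.projective_lifting_property εP (-c) hεP
  have key0 : ∀ q, f (εP (θ0 q)) = - σ (dQ 0 q) := by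
    intro q
    have := LinearMap.congr_fun hθ0 q
    rw [LinearMap.comp_apply] at this
    rw [this]
    simp [map_neg, hc]
  -- generic lifting step
  have step : ∀ (i : ℕ) (t : (Q (i + 1) : Type v) →ₗ[R] P i),
      (∀ q : Q (i + 2), t (dQ (i + 1) q) ∈ LinearMap.range (dP i)) →
      ∃ s : (Q (i + 2) : Type v) →ₗ[R] P (i + 1),
        ∀ q, dP i (s q) = - t (dQ (i + 1) q) := by
    intro i t ht
    obtain ⟨s, hs⟩ := Module.projective_lifting_property ((dP i).rangeRestrict)
      (LinearMap.codRestrict (LinearMap.range (dP i)) (-(t ∘ₗ dQ (i + 1)))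
        (fun q => neg_mem (ht q)))
      (LinearMap.surjective_rangeRestrict _)
    refine ⟨s, fun q => ?_⟩
    have := congrArg Subtype.val (LinearMap.congr_fun hs q)
    simpa using this
  -- membership propagation
  have memlem : ∀ (i : ℕ) (t : (Q (i + 1) : Type v) →ₗ[R] P i)
      (s : (Q (i + 2) : Type v) →ₗ[R] P (i + 1)),
      (∀ q, dP i (s q) = - t (dQ (i + 1) q)) →
      ∀ q : Q (i + 3), s (dQ (i + 2) q) ∈ LinearMap.range (dP (i + 1)) := by
    intro i t s hrel q
    have h0 : dP i (s (dQ (i + 2) q)) = 0 := by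
      rw [hrel]
      rw [(hexQ (i + 1)).apply_apply_eq_zero q]
      simp
    obtain ⟨p, hp⟩ := (hexP i _).mp h0
    exact ⟨p, hp⟩
  -- membership at level 0
  have mem0 : ∀ q : Q 2, θ0 (dQ 1 q) ∈ LinearMap.range (dP 0) := by
    intro q
    have h0 : εP (θ0 (dQ 1 q)) = 0 := by
      apply hf
      rw [key0, (hexQ 0).apply_apply_eq_zero q]
      simp
    obtain ⟨p, hp⟩ := (hexP0 _).mp h0
    exact ⟨p, hp⟩
  obtain ⟨θ1, hθ1⟩ := step 0 θ0 mem0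
  -- the recursive construction
  let T : ∀ i : ℕ, Σ' ts : ((Q (i + 1) : Type v) →ₗ[R] P i) ×
      ((Q (i + 2) : Type v) →ₗ[R] P (i + 1)),
      ∀ q, dP i (ts.2 q) = - ts.1 (dQ (i + 1) q) :=
    fun i => Nat.rec (⟨⟨θ0, θ1⟩, hθ1⟩)
      (fun i prev =>
        ⟨⟨prev.1.2, (step (i + 1) prev.1.2 (memlem i prev.1.1 prev.1.2 prev.2)).choose⟩,
          (step (i + 1) prev.1.2 (memlem i prev.1.1 prev.1.2 prev.2)).choose_spec⟩) i
  refine ⟨fun i => (T i).1.1, ?_, ?_⟩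
  · exact key0
  · exact fun i q => (T i).2 q

/-- Let `R` be a ring, let `n ∈ ℕ`, and let `0 → K → M → N → 0` be a short exact sequence of
`R`-modules. If both `K` and `N` are of type `FP n`, then `M` is of type `FP n`. -/
theorem fp_extension_of_fp {R : Type u} [Ring R] (n : ℕ)
    {K M N : Type v} [AddCommGroup K] [AddCommGroup M] [AddCommGroup N]
    [Module R K] [Module R M] [Module R N]
    (f : K →ₗ[R] M) (g : M →ₗ[R] N)
    (hf : Function.Injective f) (hg : Function.Surjective g)
    (hfg : Function.Exact f g)
    (hK : ModuleFP R n K) (hN : ModuleFP R n N) :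
    ModuleFP R n M := by
  classical
  obtain ⟨P, dP, εP, hPproj, hPfin, hPsurj, hPex0, hPex⟩ := hK
  obtain ⟨Q, dQ, εQ, hQproj, hQfin, hQsurj, hQex0, hQex⟩ := hN
  haveI := hQproj 0
  obtain ⟨σ, hσ⟩ := Module.projective_lifting_property g εQ hg
  have hσ' : ∀ q, g (σ q) = εQ q := fun q => LinearMap.congr_fun hσ q
  have hσ0 : ∀ q : Q 1, g (σ (dQ 0 q)) = 0 := by
    intro q
    rw [hσ', hQex0.apply_apply_eq_zero q]
  obtain ⟨θ, hθ0, hθ⟩ := exists_theta f g hf hfg P Q dP dQ εP hQproj hPsurj hPex0 hPex hQex σ hσ0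
  refine ⟨fun i : ℕ => ModuleCat.of R (↥(P i) × ↥(Q i)),
    fun i => LinearMap.prod
      ((dP i) ∘ₗ (LinearMap.fst R (P (i+1)) (Q (i+1))) + (θ i) ∘ₗ (LinearMap.snd R _ _))
      ((dQ i) ∘ₗ (LinearMap.snd R _ _)),
    (f ∘ₗ εP ∘ₗ LinearMap.fst R (P 0) (Q 0)) + (σ ∘ₗ LinearMap.snd R _ _),
    ?_, ?_, ?_, ?_, ?_⟩
  · intro i
    haveI := hPproj i
    haveI := hQproj i
    exact inferInstanceAs (Module.Projective R (↥(P i) × ↥(Q i)))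
  · intro i hi
    haveI := hPfin i hi
    haveI := hQfin i hi
    exact inferInstanceAs (Module.Finite R (↥(P i) × ↥(Q i)))
  · -- surjectivity
    intro m
    obtain ⟨q, hq⟩ := hQsurj (g m)
    have hker : g (m - σ q) = 0 := by rw [map_sub, hσ', hq, sub_self]
    obtain ⟨k, hk⟩ := (hfg _).mp hker
    obtain ⟨p, hp⟩ := hPsurj k
    refine ⟨(p, q), ?_⟩
    show f (εP p) + σ q = m
    rw [hp, hk]
    abel
  · -- exactness at degree 0
    intro x
    obtain ⟨p, q⟩ := x
    constructor
    · intro hx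
      replace hx : f (εP p) + σ q = 0 := hx
      have hq0 : εQ q = 0 := by
        have h := congrArg g hx
        rwa [map_add, map_zero, hfg.apply_apply_eq_zero, zero_add, hσ'] at h
      obtain ⟨q', hq'⟩ := (hQex0 q).mp hq0
      have h2 : f (εP (p - θ 0 q')) = 0 := by
        rw [map_sub, map_sub, hθ0, hq', sub_neg_eq_add, hx]
      have h3 : εP (p - θ 0 q') = 0 := hf (by rw [h2, map_zero])
      obtain ⟨p', hp'⟩ := (hPex0 _).mp h3
      refine ⟨(p', q'), ?_⟩
      show (dP 0 p' + θ 0 q', dQ 0 q') = (p, q)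
      rw [hp', hq']
      exact Prod.ext (sub_add_cancel _ _) rfl
    · rintro ⟨⟨p₁, q₁⟩, hy⟩
      rw [← hy]
      show f (εP (dP 0 p₁ + θ 0 q₁)) + σ (dQ 0 q₁) = 0
      rw [map_add, map_add, hPex0.apply_apply_eq_zero p₁, map_zero, hθ0]
      abel
  · -- exactness at higher degrees
    intro i x
    obtain ⟨p, q⟩ := x
    constructor
    · intro hx
      replace hx : (dP i p + θ i q, dQ i q) = ((0 : P i), (0 : Q i)) := hx
      have hx1 : dP i p + θ i q = 0 := congrArg Prod.fst hx
      have hx2 : dQ i q = 0 := congrArg Prod.snd hx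
      obtain ⟨q', hq'⟩ := (hQex i q).mp hx2
      have h2 : dP i (p - θ (i + 1) q') = 0 := by
        rw [map_sub, hθ, hq', sub_neg_eq_add]
        exact hx1
      obtain ⟨p', hp'⟩ := (hPex i _).mp h2
      refine ⟨(p', q'), ?_⟩
      show (dP (i + 1) p' + θ (i + 1) q', dQ (i + 1) q') = (p, q)
      rw [hp', hq']
      exact Prod.ext (sub_add_cancel _ _) rfl
    · rintro ⟨⟨p₁, q₁⟩, hy⟩
      rw [← hy]
      show (dP i (dP (i + 1) p₁ + θ (i + 1) q₁) + θ i (dQ (i + 1) q₁),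
        dQ i (dQ (i + 1) q₁)) = 0
      rw [map_add, hθ, (hPex i).apply_apply_eq_zero p₁, (hQex i).apply_apply_eq_zero q₁]
      exact Prod.ext (by simp) rfl
end

section
/- Let R be a ring, let n ≥ 1 be a natural number, and let 0 → K → M → N → 0 be a short exact sequence of R-modules. If M is of type FP_{n-1} and N is of type FP_n, then K is of type FP_{n-1}. -/
universe u v

open LinearMap Function

namespace FPAux
variable {R : Type u} [Ring R]

-- (imagine Res etc from partA here)
structure Res (M : ModuleCat.{v} R) where
  P : ℕ → ModuleCat.{v} R
  d : ∀ i : ℕ, P (i + 1) →ₗ[R] P i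
  ε : P 0 →ₗ[R] M
  proj : ∀ i : ℕ, Module.Projective R (P i)
  surj : Function.Surjective ε
  ex0 : Function.Exact (d 0) ε
  ex : ∀ i : ℕ, Function.Exact (d (i + 1)) (d i)

/-- Shift of a resolution: resolution of the kernel of the augmentation. -/
noncomputable def Res.shift {M : ModuleCat.{v} R} (r : Res M) :
    Res (ModuleCat.of R ↥(LinearMap.ker r.ε)) where
  P i := r.P (i + 1)
  d i := r.d (i + 1)
  ε := LinearMap.codRestrict _ (r.d 0) (fun x => r.ex0.apply_apply_eq_zero x)
  proj i := r.proj (i + 1)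
  surj := by
    rintro ⟨y, hy⟩
    obtain ⟨z, hz⟩ := (r.ex0 y).mp hy
    exact ⟨z, Subtype.ext hz⟩
  ex0 := by
    intro y
    exact Iff.trans Subtype.ext_iff (r.ex 0 y)
  ex i := r.ex (i + 1)

/-- Prepending one step to a resolution. -/
noncomputable def Res.prepend {A P0 : Type v} [AddCommGroup A] [Module R A]
    [AddCommGroup P0] [Module R P0] {B : ModuleCat.{v} R} (r : Res B)
    (hP : Module.Projective R P0) (j : ↥B →ₗ[R] P0) (ε : P0 →ₗ[R] A)
    (hj : Function.Injective j) (hε : Function.Surjective ε)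
    (hje : Function.Exact j ε) : Res (ModuleCat.of R A) where
  P i := Nat.casesOn i (ModuleCat.of R P0) r.P
  d i := Nat.casesOn i (j.comp r.ε) r.d
  ε := ε
  proj i := by cases i with
    | zero => exact hP
    | succ k => exact r.proj k
  surj := hε
  ex0 := by
    intro y
    show ε y = 0 ↔ y ∈ Set.range ⇑(j ∘ₗ r.ε)
    rw [hje y]
    constructor
    · rintro ⟨b, rfl⟩
      obtain ⟨z, hz⟩ := r.surj b
      exact ⟨z, by simp [hz]⟩
    · rintro ⟨z, rfl⟩
      exact ⟨r.ε z, rfl⟩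
  ex i := by
    cases i with
    | zero =>
      intro y
      show (j ∘ₗ r.ε) y = 0 ↔ y ∈ Set.range ⇑(r.d 0)
      exact Iff.trans ⟨fun h => hj (by simpa using h), fun h => by simp [h]⟩ (r.ex0 y)
    | succ k => exact r.ex k

/-- Transport a resolution along a linear equivalence. -/
noncomputable def Res.congr {A B : Type v} [AddCommGroup A] [Module R A]
    [AddCommGroup B] [Module R B] (r : Res (ModuleCat.of R A)) (e : A ≃ₗ[R] B) :
    Res (ModuleCat.of R B) where
  P := r.P
  d := r.d
  ε := (e : A →ₗ[R] B).comp r.ε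
  proj := r.proj
  surj := e.surjective.comp r.surj
  ex0 := by
    intro y
    show (e : A →ₗ[R] B) (r.ε y) = 0 ↔ _
    exact Iff.trans (by rw [← map_zero (e : A →ₗ[R] B)]; exact ⟨fun h => e.injective h, fun h => by rw [h]⟩) (r.ex0 y)
  ex := r.ex


/-- A short exact sequence with chosen resolutions of the two ends. -/
structure State (R : Type u) [Ring R] where
  A : ModuleCat.{v} R
  B : ModuleCat.{v} R
  C : ModuleCat.{v} R
  f : A →ₗ[R] B
  g : B →ₗ[R] C
  hf : Function.Injective f
  hg : Function.Surjective g
  hfg : Function.Exact f g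
  resA : Res A
  resC : Res C

variable (s : State.{u,v} R)

/-- The first module of the horseshoe resolution. -/
noncomputable def State.P0 : ModuleCat.{v} R :=
  ModuleCat.of R (↥(s.resA.P 0) × ↥(s.resC.P 0))

/-- A lift of the augmentation of `resC` through `g`. -/
noncomputable def State.h : ↥(s.resC.P 0) →ₗ[R] ↥s.B :=
  have := s.resC.proj 0
  (Module.projective_lifting_property s.g s.resC.ε s.hg).choose

lemma State.g_h (x : ↥(s.resC.P 0)) : s.g (s.h x) = s.resC.ε x := by
  have := (Module.projective_lifting_property s.g s.resC.ε s.hg (h := s.resC.proj 0)).choose_spec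
  exact DFunLike.congr_fun this x

/-- The surjection `P0 → B` of the horseshoe. -/
noncomputable def State.phi : ↥s.P0 →ₗ[R] ↥s.B :=
  (s.f.comp s.resA.ε).coprod s.h

lemma State.phi_apply (x : ↥(s.resA.P 0)) (y : ↥(s.resC.P 0)) :
    s.phi (x, y) = s.f (s.resA.ε x) + s.h y := rfl

lemma State.phi_surj : Function.Surjective s.phi := by
  intro b
  obtain ⟨y, hy⟩ := s.resC.surj (s.g b)
  have hker : s.g (b - s.h y) = 0 := by
    rw [map_sub, s.g_h, hy, sub_self]
  obtain ⟨a, ha⟩ := (s.hfg (b - s.h y)).mp hker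
  obtain ⟨x, hx⟩ := s.resA.surj a
  exact ⟨(x, y), by rw [s.phi_apply, hx, ha]; abel⟩

/-- The inclusion `ker resA.ε → ker phi`. -/
noncomputable def State.alpha : ↥(LinearMap.ker s.resA.ε) →ₗ[R] ↥(LinearMap.ker s.phi) :=
  LinearMap.codRestrict _ ((LinearMap.inl R ↥(s.resA.P 0) ↥(s.resC.P 0)).comp
    (LinearMap.ker s.resA.ε).subtype) (by
      rintro ⟨x, hx⟩
      rw [LinearMap.mem_ker]
      show s.phi (x, 0) = 0
      have hx' : s.resA.ε x = 0 := hx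
      rw [s.phi_apply, hx', map_zero, map_zero, add_zero])

lemma State.alpha_apply (x : ↥(LinearMap.ker s.resA.ε)) :
    ((s.alpha x : ↥s.P0) : ↥(s.resA.P 0) × ↥(s.resC.P 0)) = ((x : ↥(s.resA.P 0)), 0) := rfl

lemma State.alpha_inj : Function.Injective s.alpha := by
  intro x y hxy
  have := congrArg (fun z => (z : ↥(s.resA.P 0) × ↥(s.resC.P 0)).1) (Subtype.ext_iff.mp hxy)
  exact Subtype.ext this

/-- The projection `ker phi → ker resC.ε`. -/
noncomputable def State.beta : ↥(LinearMap.ker s.phi) →ₗ[R] ↥(LinearMap.ker s.resC.ε) :=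
  LinearMap.codRestrict _ ((LinearMap.snd R ↥(s.resA.P 0) ↥(s.resC.P 0)).comp
    (LinearMap.ker s.phi).subtype) (by
      rintro ⟨⟨x, y⟩, hxy⟩
      have hxy' : s.f (s.resA.ε x) + s.h y = 0 := hxy
      rw [LinearMap.mem_ker]
      show s.resC.ε y = 0
      rw [← s.g_h]
      have : s.h y = - s.f (s.resA.ε x) := by linear_combination (norm := abel) hxy'
      rw [this, map_neg, s.hfg.apply_apply_eq_zero, neg_zero])

lemma State.beta_surj : Function.Surjective s.beta := by
  rintro ⟨y, hy⟩
  have h1 : s.g (s.h y) = 0 := by rw [s.g_h]; exact hy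
  obtain ⟨a, ha⟩ := (s.hfg (s.h y)).mp h1
  obtain ⟨x, hx⟩ := s.resA.surj a
  refine ⟨⟨(-x, y), ?_⟩, rfl⟩
  show s.phi (-x, y) = 0
  rw [s.phi_apply, map_neg, map_neg, hx, ha, neg_add_cancel]

lemma State.exact_alpha_beta : Function.Exact s.alpha s.beta := by
  rintro ⟨⟨x, y⟩, hxy⟩
  constructor
  · intro h0
    have hy : y = 0 := congrArg Subtype.val h0
    subst hy
    have hx : s.f (s.resA.ε x) = 0 := by
      have : s.phi (x, 0) = 0 := hxy
      rwa [s.phi_apply, map_zero, add_zero] at this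
    have hx' : s.resA.ε x = 0 := s.hf (by rw [hx, map_zero])
    exact ⟨⟨x, hx'⟩, Subtype.ext (Prod.ext rfl rfl)⟩
  · rintro ⟨⟨w, hw⟩, h⟩
    have h2 := congrArg
      (fun z : ↥(LinearMap.ker s.phi) => ((z : ↥s.P0) : ↥(s.resA.P 0) × ↥(s.resC.P 0)).2) h
    exact Subtype.ext h2.symm

/-- The next state of the horseshoe construction. -/
noncomputable def State.next : State.{u,v} R where
  A := ModuleCat.of R ↥(LinearMap.ker s.resA.ε)
  B := ModuleCat.of R ↥(LinearMap.ker s.phi)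
  C := ModuleCat.of R ↥(LinearMap.ker s.resC.ε)
  f := s.alpha
  g := s.beta
  hf := s.alpha_inj
  hg := s.beta_surj
  hfg := s.exact_alpha_beta
  resA := s.resA.shift
  resC := s.resC.shift

/-- Iterating the horseshoe construction. -/
noncomputable def states (s : State.{u,v} R) : ℕ → State.{u,v} R
  | 0 => s
  | (i+1) => (states s i).next

/-- The connecting map: `phi` of the next state, viewed with target `ker phi`. -/
noncomputable def State.e : ↥(s.next.P0) →ₗ[R] ↥(LinearMap.ker s.phi) := s.next.phi

lemma State.e_surj : Function.Surjective s.e := s.next.phi_surj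

noncomputable def hsD (s : State.{u,v} R) (i : ℕ) :
    ↥((states s (i+1)).P0) →ₗ[R] ↥((states s i).P0) :=
  (LinearMap.ker (states s i).phi).subtype.comp ((states s i).e)

lemma hs_exact_phi (s : State.{u,v} R) (i : ℕ) :
    Function.Exact (hsD s i) ((states s i).phi) := by
  intro y
  constructor
  · intro hy
    obtain ⟨z, hz⟩ := (states s i).e_surj ⟨y, hy⟩
    refine ⟨z, ?_⟩
    show ((LinearMap.ker (states s i).phi).subtype) ((states s i).e z) = y
    rw [hz]
    rfl
  · rintro ⟨z, rfl⟩
    exact ((states s i).e z).2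

lemma hs_exact_d (s : State.{u,v} R) (i : ℕ) :
    Function.Exact (hsD s (i+1)) (hsD s i) := by
  intro y
  have h1 : (hsD s i y = 0) ↔ ((states s i).e y = 0) := by
    show (((LinearMap.ker (states s i).phi).subtype) ((states s i).e y) = 0) ↔ _
    exact ZeroMemClass.coe_eq_zero
  exact Iff.trans h1 (hs_exact_phi s (i+1) y)

/-- The horseshoe resolution of the middle term. -/
noncomputable def horseshoe (s : State.{u,v} R) : Res s.B where
  P i := (states s i).P0
  d := hsD s
  ε := s.phi
  proj i := by
    have h1 := (states s i).resA.proj 0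
    have h2 := (states s i).resC.proj 0
    exact inferInstanceAs (Module.Projective R (↥((states s i).resA.P 0) × ↥((states s i).resC.P 0)))
  surj := s.phi_surj
  ex0 := hs_exact_phi s 0
  ex := hs_exact_d s

lemma states_resA_P (s : State.{u,v} R) (i j : ℕ) :
    (states s i).resA.P j = s.resA.P (i + j) := by
  induction i generalizing j with
  | zero => rw [Nat.zero_add]; rfl
  | succ k ih =>
    have h0 : (states s (k+1)).resA.P j = (states s k).resA.P (j+1) := rfl
    rw [h0, ih, Nat.add_comm j 1, ← Nat.add_assoc]

lemma states_resC_P (s : State.{u,v} R) (i j : ℕ) :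
    (states s i).resC.P j = s.resC.P (i + j) := by
  induction i generalizing j with
  | zero => rw [Nat.zero_add]; rfl
  | succ k ih =>
    have h0 : (states s (k+1)).resC.P j = (states s k).resC.P (j+1) := rfl
    rw [h0, ih, Nat.add_comm j 1, ← Nat.add_assoc]

lemma horseshoe_fin (s : State.{u,v} R) (n : ℕ)
    (hA : ∀ i < n, Module.Finite R ↥(s.resA.P i)) (hC : ∀ i < n, Module.Finite R ↥(s.resC.P i)) :
    ∀ i < n, Module.Finite R ↥((horseshoe s).P i) := by
  intro i hi
  have e1 := states_resA_P s i 0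
  have e2 := states_resC_P s i 0
  have f1 : Module.Finite R ↥((states s i).resA.P 0) := by rw [e1]; exact hA _ (by omega)
  have f2 : Module.Finite R ↥((states s i).resC.P 0) := by rw [e2]; exact hC _ (by omega)
  exact inferInstanceAs (Module.Finite R (↥((states s i).resA.P 0) × ↥((states s i).resC.P 0)))

/-! ### The `ModuleFP` interface -/

variable {n : ℕ} {A B C : Type v} [AddCommGroup A] [Module R A] [AddCommGroup B] [Module R B]
  [AddCommGroup C] [Module R C]

lemma fp_iff :
    ModuleFP R n A ↔ ∃ r : Res (ModuleCat.of R A), ∀ i ≤ n, Module.Finite R ↥(r.P i) := by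
  constructor
  · rintro ⟨P, d, ε, hproj, hfin, hsurj, hex0, hex⟩
    exact ⟨⟨P, d, ε, hproj, hsurj, hex0, hex⟩, hfin⟩
  · rintro ⟨r, hfin⟩
    exact ⟨r.P, r.d, r.ε, r.proj, hfin, r.surj, r.ex0, r.ex⟩

/-- Extension lemma: the middle of a SES with both ends FP_n is FP_n. -/
lemma fp_middle (f : A →ₗ[R] B) (g : B →ₗ[R] C)
    (hf : Function.Injective f) (hg : Function.Surjective g) (hfg : Function.Exact f g)
    (hA : ModuleFP R n A) (hC : ModuleFP R n C) : ModuleFP R n B := by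
  obtain ⟨rA, hfA⟩ := fp_iff.mp hA
  obtain ⟨rC, hfC⟩ := fp_iff.mp hC
  let s : State.{u,v} R :=
    ⟨ModuleCat.of R A, ModuleCat.of R B, ModuleCat.of R C, f, g, hf, hg, hfg, rA, rC⟩
  refine fp_iff.mpr ⟨horseshoe s, fun i hi => ?_⟩
  exact horseshoe_fin s (n+1) (fun j hj => hfA j (by omega)) (fun j hj => hfC j (by omega))
    i (by omega)

/-- Prepending a finite projective step to a resolution. -/
lemma fp_prepend {P0 : Type v} [AddCommGroup P0] [Module R P0]
    (hproj : Module.Projective R P0) (hfin : Module.Finite R P0)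
    (j : B →ₗ[R] P0) (ε : P0 →ₗ[R] A) (hj : Function.Injective j)
    (hε : Function.Surjective ε) (hje : Function.Exact j ε)
    (rB : Res (ModuleCat.of R B)) (hfB : ∀ i < n, Module.Finite R ↥(rB.P i)) :
    ModuleFP R n A := by
  refine fp_iff.mpr ⟨rB.prepend hproj j ε hj hε hje, fun i hi => ?_⟩
  cases i with
  | zero => exact hfin
  | succ k => exact hfB k (by omega)

/-- Shifting: the kernel of the augmentation of an FP_{n+1} module is FP_n. -/
lemma fp_shift (hA : ModuleFP R (n+1) A) :
    ∃ (P0 : ModuleCat.{v} R) (ε : ↥P0 →ₗ[R] A), Module.Projective R ↥P0 ∧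
      Module.Finite R ↥P0 ∧ Function.Surjective ε ∧ ModuleFP R n ↥(LinearMap.ker ε) := by
  obtain ⟨r, hfin⟩ := fp_iff.mp hA
  exact ⟨r.P 0, r.ε, r.proj 0, hfin 0 (by omega), r.surj,
    fp_iff.mpr ⟨r.shift, fun i hi => hfin (i+1) (by omega)⟩⟩

/-- Transport along a linear equivalence. -/
lemma fp_congr (e : A ≃ₗ[R] B) (hA : ModuleFP R n A) : ModuleFP R n B := by
  obtain ⟨r, hfin⟩ := fp_iff.mp hA
  exact fp_iff.mpr ⟨r.congr e, hfin⟩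

/-- The tautological resolution of a projective module. -/
noncomputable def resOfProj {Q : Type v} [AddCommGroup Q] [Module R Q]
    (hq : Module.Projective R Q) : Res (ModuleCat.of R Q) where
  P i := Nat.casesOn i (ModuleCat.of R Q) (fun _ => ModuleCat.of R PUnit.{v+1})
  d i := 0
  ε := LinearMap.id
  proj i := by
    cases i with
    | zero => exact hq
    | succ k => exact inferInstance
  surj := Function.surjective_id
  ex0 := by
    intro y
    constructor
    · intro h
      exact ⟨0, by simp [(show y = 0 from h).symm]⟩
    · rintro ⟨z, rfl⟩
      simp only [LinearMap.zero_apply, map_zero]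
  ex i := by
    intro y
    constructor
    · intro _
      refine ⟨0, ?_⟩
      show _ = y
      exact Subsingleton.elim (α := PUnit.{v+1}) _ _
    · intro _
      exact LinearMap.zero_apply y

/-- A finitely generated projective module is FP_n for every n. -/
lemma fp_proj {Q : Type v} [AddCommGroup Q] [Module R Q]
    (hq : Module.Projective R Q) (hfq : Module.Finite R Q) (n : ℕ) : ModuleFP R n Q := by
  refine fp_iff.mpr ⟨resOfProj hq, fun i hi => ?_⟩
  cases i with
  | zero => exact hfq
  | succ k => exact inferInstanceAs (Module.Finite R PUnit.{v+1})

/-- Direct sum of a resolution with a projective module. -/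
noncomputable def Res.sum (r : Res (ModuleCat.of R A)) {Q : Type v} [AddCommGroup Q]
    [Module R Q] (hq : Module.Projective R Q) : Res (ModuleCat.of R (A × Q)) where
  P i := Nat.casesOn i (ModuleCat.of R (↥(r.P 0) × Q)) (fun k => r.P (k+1))
  d i := Nat.casesOn i ((LinearMap.inl R ↥(r.P 0) Q).comp (r.d 0)) (fun k => r.d (k+1))
  ε := r.ε.prodMap LinearMap.id
  proj i := by
    cases i with
    | zero =>
      have := r.proj 0
      exact inferInstanceAs (Module.Projective R (↥(r.P 0) × Q))
    | succ k => exact r.proj (k+1)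
  surj := by
    rintro ⟨a, q⟩
    obtain ⟨x, hx⟩ := r.surj a
    exact ⟨(x, q), by show (r.ε x, q) = (a, q); rw [hx]⟩
  ex0 := by
    rintro ⟨x, q⟩
    show (r.ε x, q) = 0 ↔ _
    rw [Prod.mk_eq_zero]
    constructor
    · rintro ⟨hx, hq⟩
      obtain ⟨z, hz⟩ := (r.ex0 x).mp hx
      exact ⟨z, by show (r.d 0 z, (0 : Q)) = (x, q); rw [hz, hq]⟩
    · rintro ⟨z, hz⟩
      have hz' : (r.d 0 z, (0 : Q)) = (x, q) := hz
      obtain ⟨h1, h2⟩ := Prod.mk.inj hz'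
      rw [← h1, ← h2]
      exact ⟨r.ex0.apply_apply_eq_zero z, rfl⟩
  ex i := by
    cases i with
    | zero =>
      intro y
      have h1 : ((LinearMap.inl R ↥(r.P 0) Q).comp (r.d 0)) y = 0 ↔ r.d 0 y = 0 := by
        show (r.d 0 y, (0 : Q)) = 0 ↔ _
        rw [Prod.mk_eq_zero]
        exact ⟨fun h => h.1, fun h => ⟨h, rfl⟩⟩
      exact Iff.trans h1 (r.ex 0 y)
    | succ k => exact r.ex (k+1)

lemma fp_sum {Q : Type v} [AddCommGroup Q] [Module R Q]
    (hq : Module.Projective R Q) (hfq : Module.Finite R Q)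
    (hA : ModuleFP R n A) : ModuleFP R n (A × Q) := by
  obtain ⟨r, hfin⟩ := fp_iff.mp hA
  refine fp_iff.mpr ⟨r.sum hq, fun i hi => ?_⟩
  cases i with
  | zero =>
    have := hfin 0 (by omega)
    exact inferInstanceAs (Module.Finite R (↥(r.P 0) × Q))
  | succ k => exact hfin (k+1) (by omega)

/-- Schanuel's lemma. -/
lemma schanuel {X P P' : Type v} [AddCommGroup X] [Module R X] [AddCommGroup P] [Module R P]
    [AddCommGroup P'] [Module R P'] (hp : Module.Projective R P) (hp' : Module.Projective R P')
    (π : P →ₗ[R] X) (π' : P' →ₗ[R] X) (hπ : Function.Surjective π)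
    (hπ' : Function.Surjective π') :
    Nonempty ((↥(LinearMap.ker π) × P') ≃ₗ[R] ↥(LinearMap.ker π') × P) := by
  set σ : P × P' →ₗ[R] X := π.comp (LinearMap.fst R P P') - π'.comp (LinearMap.snd R P P')
    with hσ
  set L := LinearMap.ker σ with hL
  -- the two projections from L
  set gP : ↥L →ₗ[R] P := (LinearMap.fst R P P').comp L.subtype with hgP
  set gP' : ↥L →ₗ[R] P' := (LinearMap.snd R P P').comp L.subtype with hgP'
  have hgPs : Function.Surjective gP := by
    intro p
    obtain ⟨p', hp'⟩ := hπ' (π p)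
    exact ⟨⟨(p, p'), show π p - π' p' = 0 by rw [hp', sub_self]⟩, rfl⟩
  have hgP's : Function.Surjective gP' := by
    intro p'
    obtain ⟨p, hp⟩ := hπ (π' p')
    exact ⟨⟨(p, p'), show π p - π' p' = 0 by rw [hp, sub_self]⟩, rfl⟩
  -- the two inclusions into L
  set jP : ↥(LinearMap.ker π') →ₗ[R] ↥L := LinearMap.codRestrict L
    ((LinearMap.inr R P P').comp (LinearMap.ker π').subtype) (by
      rintro ⟨w, hw⟩
      have hw' : π' w = 0 := hw
      show π 0 - π' w = 0
      rw [map_zero, hw', sub_zero]) with hjP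
  set jP' : ↥(LinearMap.ker π) →ₗ[R] ↥L := LinearMap.codRestrict L
    ((LinearMap.inl R P P').comp (LinearMap.ker π).subtype) (by
      rintro ⟨w, hw⟩
      have hw' : π w = 0 := hw
      show π w - π' 0 = 0
      rw [map_zero, hw', sub_zero]) with hjP'
  have hjPi : Function.Injective jP := by
    intro x y h
    exact Subtype.ext (congrArg (fun z : ↥L => (z : P × P').2) h)
  have hjP'i : Function.Injective jP' := by
    intro x y h
    exact Subtype.ext (congrArg (fun z : ↥L => (z : P × P').1) h)
  have hrangeP : LinearMap.range jP = LinearMap.ker gP := by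
    apply le_antisymm
    · rintro z ⟨⟨w, hw⟩, rfl⟩
      show ((0 : P), w).1 = 0
      rfl
    · rintro ⟨⟨a, b⟩, hab⟩ hz
      have ha : a = 0 := hz
      have hab' : π a - π' b = 0 := hab
      rw [ha, map_zero, zero_sub, neg_eq_zero] at hab'
      refine ⟨⟨b, hab'⟩, Subtype.ext ?_⟩
      show ((0 : P), b) = (a, b)
      rw [ha]
  have hrangeP' : LinearMap.range jP' = LinearMap.ker gP' := by
    apply le_antisymm
    · rintro z ⟨⟨w, hw⟩, rfl⟩
      show (w, (0 : P')).2 = 0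
      rfl
    · rintro ⟨⟨a, b⟩, hab⟩ hz
      have hb : b = 0 := hz
      have hab' : π a - π' b = 0 := hab
      rw [hb, map_zero, sub_zero] at hab'
      refine ⟨⟨a, hab'⟩, Subtype.ext ?_⟩
      show (a, (0 : P')) = (a, b)
      rw [hb]
  -- split both surjections
  obtain ⟨s1, hs1⟩ := Module.projective_lifting_property (h := hp) gP LinearMap.id hgPs
  obtain ⟨s2, hs2⟩ := Module.projective_lifting_property (h := hp') gP' LinearMap.id hgP's
  have e1 : (↥(LinearMap.ker π') × P) ≃ₗ[R] ↥L :=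
    lequivProdOfRightSplitExact hjPi hrangeP hs1
  have e2 : (↥(LinearMap.ker π) × P') ≃ₗ[R] ↥L :=
    lequivProdOfRightSplitExact hjP'i hrangeP' hs2
  exact ⟨e2.trans e1.symm⟩

/-- Pulling back a SES along a surjection onto the middle term. -/
lemma ker_ses {PP : Type v} [AddCommGroup PP] [Module R PP]
    (f : A →ₗ[R] B) (g : B →ₗ[R] C) (hf : Function.Injective f) (hfg : Function.Exact f g)
    (ε : PP →ₗ[R] B) (hε : Function.Surjective ε) :
    ∃ (α : ↥(LinearMap.ker ε) →ₗ[R] ↥(LinearMap.ker (g.comp ε)))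
      (β : ↥(LinearMap.ker (g.comp ε)) →ₗ[R] A),
      Function.Injective α ∧ Function.Surjective β ∧ Function.Exact α β := by
  set α : ↥(LinearMap.ker ε) →ₗ[R] ↥(LinearMap.ker (g.comp ε)) :=
    LinearMap.codRestrict _ (LinearMap.ker ε).subtype (by
      rintro ⟨x, hx⟩
      rw [LinearMap.mem_ker]
      show g (ε x) = 0
      have hx' : ε x = 0 := hx
      rw [hx', map_zero]) with hα
  set δ : ↥(LinearMap.ker (g.comp ε)) →ₗ[R] ↥(LinearMap.range f) :=
    LinearMap.codRestrict _ (ε.comp (LinearMap.ker (g.comp ε)).subtype) (by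
      rintro ⟨x, hx⟩
      have hx' : g (ε x) = 0 := hx
      obtain ⟨a, ha⟩ := (hfg (ε x)).mp hx'
      exact ⟨a, ha⟩) with hδ
  set β : ↥(LinearMap.ker (g.comp ε)) →ₗ[R] A :=
    ((LinearEquiv.ofInjective f hf).symm : ↥(LinearMap.range f) →ₗ[R] A).comp δ with hβ
  have hδ_coe : ∀ z : ↥(LinearMap.ker (g.comp ε)), ((δ z : ↥(LinearMap.range f)) : B) = ε z :=
    fun z => rfl
  refine ⟨α, β, ?_, ?_, ?_⟩
  · intro x y h
    exact Subtype.ext (congrArg (fun z : ↥(LinearMap.ker (g.comp ε)) => (z : PP)) h)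
  · intro a
    obtain ⟨x, hx⟩ := hε (f a)
    have hxk : x ∈ LinearMap.ker (g.comp ε) := by
      rw [LinearMap.mem_ker]
      show g (ε x) = 0
      rw [hx]
      exact hfg.apply_apply_eq_zero a
    refine ⟨⟨x, hxk⟩, ?_⟩
    show (LinearEquiv.ofInjective f hf).symm (δ ⟨x, hxk⟩) = a
    rw [LinearEquiv.symm_apply_eq]
    refine Subtype.ext ?_
    rw [LinearEquiv.ofInjective_apply]
    exact (hδ_coe ⟨x, hxk⟩).trans hx
  · rintro ⟨x, hx⟩
    have hb : β ⟨x, hx⟩ = 0 ↔ ε x = 0 := by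
      rw [hβ]
      show (LinearEquiv.ofInjective f hf).symm (δ ⟨x, hx⟩) = 0 ↔ _
      rw [LinearEquiv.symm_apply_eq, map_zero]
      constructor
      · intro h
        have := congrArg (Subtype.val : ↥(LinearMap.range f) → B) h
        rwa [hδ_coe] at this
      · intro h
        exact Subtype.ext ((hδ_coe ⟨x, hx⟩).trans h)
    rw [hb]
    constructor
    · intro h
      exact ⟨⟨x, h⟩, Subtype.ext rfl⟩
    · rintro ⟨⟨w, hw⟩, hwz⟩
      have : w = x := congrArg (fun z : ↥(LinearMap.ker (g.comp ε)) => (z : PP)) hwz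
      rw [← this]
      exact hw

/-- Quotient lemma: if `A` has a resolution finite below `n` and `B` is FP_n,
then `C` is FP_n. -/
lemma fp_quot (f : A →ₗ[R] B) (g : B →ₗ[R] C)
    (hf : Function.Injective f) (hg : Function.Surjective g) (hfg : Function.Exact f g)
    (rA : Res (ModuleCat.of R A)) (hfA : ∀ i < n, Module.Finite R ↥(rA.P i))
    (hB : ModuleFP R n B) : ModuleFP R n C := by
  obtain ⟨rB, hfB⟩ := fp_iff.mp hB
  set ε : ↥(rB.P 0) →ₗ[R] B := rB.ε with hε
  obtain ⟨α, β, hαi, hβs, hαβ⟩ := ker_ses f g hf hfg ε rB.surj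
  -- resolution of ker (g ∘ ε) via the horseshoe
  let s : State.{u,v} R := ⟨ModuleCat.of R ↥(LinearMap.ker ε),
    ModuleCat.of R ↥(LinearMap.ker (g.comp ε)), ModuleCat.of R A,
    α, β, hαi, hβs, hαβ, rB.shift, rA⟩
  have hker : ∀ i < n, Module.Finite R ↥((horseshoe s).P i) :=
    horseshoe_fin s n (fun j hj => hfB (j+1) (by omega)) hfA
  -- prepend the surjection g ∘ ε
  refine fp_prepend (rB.proj 0) (hfB 0 (by omega)) (LinearMap.ker (g.comp ε)).subtype
    (g.comp ε) (Submodule.injective_subtype _) (hg.comp rB.surj) ?_ (horseshoe s) hker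
  exact LinearMap.exact_iff.mpr (Submodule.range_subtype _).symm

/-- Cancellation: if `A × Q` is FP_n with `Q` finitely generated projective, so is `A`. -/
lemma fp_cancel {Q : Type v} [AddCommGroup Q] [Module R Q]
    (hq : Module.Projective R Q) (hfq : Module.Finite R Q)
    (h : ModuleFP R n (A × Q)) : ModuleFP R n A := by
  refine fp_quot (LinearMap.inr R A Q) (LinearMap.fst R A Q) LinearMap.inr_injective
    LinearMap.fst_surjective (LinearMap.exact_iff.mpr (LinearMap.ker_fst R A Q))
    (resOfProj hq) (fun i _ => ?_) h
  cases i with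
  | zero => exact hfq
  | succ k => exact inferInstanceAs (Module.Finite R PUnit.{v+1})

/-- Any surjection from a f.g. projective onto an FP_{n+1} module has FP_n kernel. -/
lemma fp_kernel_char {X P : Type v} [AddCommGroup X] [Module R X] [AddCommGroup P] [Module R P]
    (hp : Module.Projective R P) (hfp : Module.Finite R P) (π : P →ₗ[R] X)
    (hπ : Function.Surjective π) (hX : ModuleFP R (n+1) X) :
    ModuleFP R n ↥(LinearMap.ker π) := by
  obtain ⟨P0, ε, hP0p, hP0f, hεs, hker⟩ := fp_shift hX
  obtain ⟨e⟩ := schanuel hp hP0p π ε hπ hεs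
  have h1 : ModuleFP R n (↥(LinearMap.ker ε) × P) := fp_sum hp hfp hker
  have h2 : ModuleFP R n (↥(LinearMap.ker π) × ↥P0) := fp_congr e.symm h1
  exact fp_cancel hP0p hP0f h2

end FPAux

/-- Let `R` be a ring, let `n ≥ 1`, and let `0 → K → M → N → 0` be a short exact sequence of
`R`-modules. If `M` is of type `FP (n-1)` and `N` is of type `FP n`, then `K` is of
type `FP (n-1)`. -/
theorem fp_kernel_of_fp {R : Type u} [Ring R] (n : ℕ) (hn : 1 ≤ n)
    {K M N : Type v} [AddCommGroup K] [AddCommGroup M] [AddCommGroup N]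
    [Module R K] [Module R M] [Module R N]
    (f : K →ₗ[R] M) (g : M →ₗ[R] N)
    (hf : Function.Injective f) (hg : Function.Surjective g)
    (hfg : Function.Exact f g)
    (hM : ModuleFP R (n - 1) M) (hN : ModuleFP R n N) :
    ModuleFP R (n - 1) K := by
  obtain ⟨m, rfl⟩ : ∃ m, n = m + 1 := ⟨n - 1, by omega⟩
  simp only [Nat.add_sub_cancel] at hM ⊢
  obtain ⟨rM, hfM⟩ := FPAux.fp_iff.mp hM
  have hkq : ModuleFP R m ↥(LinearMap.ker (g.comp rM.ε)) :=
    FPAux.fp_kernel_char (rM.proj 0) (hfM 0 (by omega)) (g.comp rM.ε)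
      (hg.comp rM.surj) hN
  obtain ⟨α, β, hαi, hβs, hαβ⟩ := FPAux.ker_ses f g hf hfg rM.ε rM.surj
  exact FPAux.fp_quot α β hαi hβs hαβ rM.shift (fun i hi => hfM (i+1) (by omega)) hkq
end
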